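/- Let u be an odd integer, and suppose a single particle-motion process ppm_u^{(m)} is applied to a generalised frequency sequence θ with (θ_u, θ_{u+1}) = (h, 0), h > 0, and θ_i + θ_{i+1} ≤ h for all i ≥ u, producing θ'. Then: every even index i has θ_i even and m is even, if and only if every even index i has θ'_i even. -/

import Mathlib

/-!
Track the parity of the even-indexed frequencies. At focus `w` exactly one of `w`, `w + 1` is
even; call it `e`. A particle motion changes `f e` by `±1` and nothing else at an even index,
so it trades one unit of the remaining motion count against the parity of `f e`. A focus shift
either keeps `e` (when `w` is odd) or moves it from `w` to `w + 2`, where the shift condition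
forces `f (w + 2) = f w`. So whether "`f` is even at even indices other than `e`, and `f e + m`
is even" holds does not change along the process; at the end (`m = 0`) it says that the final
sequence is even at all even indices, and at the start `e = u + 1` carries the value `0`.
-/

/-- The particle-motion process: `PPM (f, u) m (g, v)` means that starting from the
generalised frequency sequence `f` with focus at index `u`, after exactly `m` particle
motions (interleaved with the forced focus shifts) the process stops at the sequence `g`
with focus at index `v`.  With `h := f_w + f_{w+1}` the invariant sum of the focused pair:
if `f_{w+1} + f_{w+2} = h` the focus shifts to `w+1` (no motion); if `f_{w+1} + f_{w+2} < h`
the pair `(f_w, f_{w+1})` becomes `(f_w - 1, f_{w+1} + 1)` (one motion).  The process stops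
immediately after the `m`-th motion (or at once if `m = 0`). -/
inductive PPM : ((ℤ → ℕ) × ℤ) → ℕ → ((ℤ → ℕ) × ℤ) → Prop
  | zero (f : ℤ → ℕ) (w : ℤ) : PPM (f, w) 0 (f, w)
  | shift {f : ℤ → ℕ} {w : ℤ} {m : ℕ} {t : (ℤ → ℕ) × ℤ} (hm : 0 < m)
      (hcond : f (w+1) + f (w+2) = f w + f (w+1))
      (h : PPM (f, w+1) m t) : PPM (f, w) m t
  | motion {f : ℤ → ℕ} {w : ℤ} {m : ℕ} {t : (ℤ → ℕ) × ℤ}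
      (hcond : f (w+1) + f (w+2) < f w + f (w+1))
      (h : PPM (Function.update (Function.update f w (f w - 1)) (w+1) (f (w+1) + 1), w) m t) :
      PPM (f, w) (m+1) t

def evenMember (w : ℤ) : ℤ := if Even w then w else w + 1

lemma evenMember_of_even {w : ℤ} (hw : Even w) : evenMember w = w := if_pos hw

lemma evenMember_of_odd {w : ℤ} (hw : Odd w) : evenMember w = w + 1 :=
  if_neg (Int.not_even_iff_odd.mpr hw)

lemma even_evenMember (w : ℤ) : Even (evenMember w) := by
  rcases Int.even_or_odd w with hw | hw
  · rwa [evenMember_of_even hw]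
  · rw [evenMember_of_odd hw]
    exact hw.add_one

lemma evenMember_add_one_of_even {w : ℤ} (hw : Even w) : evenMember (w + 1) = w + 2 := by
  rw [evenMember_of_odd hw.add_one, add_assoc, one_add_one_eq_two]

lemma evenMember_add_one_of_odd {w : ℤ} (hw : Odd w) : evenMember (w + 1) = evenMember w := by
  rw [evenMember_of_even hw.add_one, evenMember_of_odd hw]

def EvenAtEvensExcept (f : ℤ → ℕ) (e : ℤ) : Prop := ∀ i, Even i → i ≠ e → Even (f i)

section EvenAtEvensExcept

variable {f g : ℤ → ℕ} {a b : ℤ}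

lemma evenAtEvensExcept_and_iff_forall (ha : Even a) :
    (EvenAtEvensExcept f a ∧ Even (f a)) ↔ ∀ i, Even i → Even (f i) := by
  refine ⟨fun ⟨hf, hfa⟩ i hi => ?_, fun hf => ⟨fun i hi _ => hf i hi, hf a ha⟩⟩
  rcases eq_or_ne i a with rfl | hia
  · exact hfa
  · exact hf i hi hia

lemma evenAtEvensExcept_congr (hfg : ∀ i, Even i → i ≠ a → f i = g i) :
    EvenAtEvensExcept f a ↔ EvenAtEvensExcept g a :=
  forall₃_congr fun i hi hia => by rw [hfg i hi hia]

lemma EvenAtEvensExcept.move (hb : Even b) (hab : f a = f b) {n : ℕ}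
    (hf : EvenAtEvensExcept f a) (hn : Even (f a + n)) :
    EvenAtEvensExcept f b ∧ Even (f b + n) := by
  rcases eq_or_ne a b with rfl | hne
  · exact ⟨hf, hn⟩
  have hfb : Even (f b) := hf b hb hne.symm
  refine ⟨fun i hi hib => ?_, hab ▸ hn⟩
  rcases eq_or_ne i a with rfl | hia
  · exact hab ▸ hfb
  · exact hf i hi hia

lemma evenAtEvensExcept_and_iff_of_eq (ha : Even a) (hb : Even b) (hab : f a = f b) (n : ℕ) :
    (EvenAtEvensExcept f a ∧ Even (f a + n)) ↔ (EvenAtEvensExcept f b ∧ Even (f b + n)) :=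
  ⟨fun h => h.1.move hb hab h.2, fun h => h.1.move ha hab.symm h.2⟩

end EvenAtEvensExcept

section Motion

variable {f : ℤ → ℕ} {w : ℤ}

def moveParticle (f : ℤ → ℕ) (w : ℤ) : ℤ → ℕ :=
  Function.update (Function.update f w (f w - 1)) (w + 1) (f (w + 1) + 1)

lemma moveParticle_of_ne {i : ℤ} (hi : i ≠ w) (hi' : i ≠ w + 1) : moveParticle f w i = f i := by
  rw [moveParticle, Function.update_of_ne hi', Function.update_of_ne hi]

lemma even_moveParticle_evenMember_add_iff (hfw : 1 ≤ f w) (m : ℕ) :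
    Even (moveParticle f w (evenMember w) + m) ↔ Even (f (evenMember w) + (m + 1)) := by
  rcases Int.even_or_odd w with hw | hw
  · rw [moveParticle, evenMember_of_even hw, Function.update_of_ne (by omega),
      Function.update_self, show f w + (m + 1) = f w - 1 + m + 2 by omega]
    exact (Nat.even_add.trans (iff_true_right even_two)).symm
  · rw [moveParticle, evenMember_of_odd hw, Function.update_self, add_assoc, add_comm 1]

lemma evenAtEvensExcept_moveParticle_iff :
    EvenAtEvensExcept (moveParticle f w) (evenMember w) ↔ EvenAtEvensExcept f (evenMember w) := by
  refine evenAtEvensExcept_congr fun i hi hie => moveParticle_of_ne ?_ ?_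
  all_goals rcases Int.even_or_odd w with hw | hw
  · rwa [evenMember_of_even hw] at hie
  · rintro rfl
    exact Int.not_even_iff_odd.mpr hw hi
  · rintro rfl
    exact Int.not_even_iff_odd.mpr hw.add_one hi
  · rwa [evenMember_of_odd hw] at hie

end Motion

theorem PPM.evenAtEvensExcept_and_iff {s t : (ℤ → ℕ) × ℤ} {m : ℕ} (hp : PPM s m t) :
    (EvenAtEvensExcept s.1 (evenMember s.2) ∧ Even (s.1 (evenMember s.2) + m)) ↔
      ∀ i, Even i → Even (t.1 i) := by
  induction hp with
  | zero f w => exact evenAtEvensExcept_and_iff_forall (even_evenMember w)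
  | @shift f w m t _ hcond _ ih =>
    dsimp only at ih ⊢
    rw [← ih]
    rcases Int.even_or_odd w with hw | hw
    · rw [evenMember_of_even hw, evenMember_add_one_of_even hw]
      exact evenAtEvensExcept_and_iff_of_eq hw (hw.add even_two) (by omega) m
    · rw [evenMember_add_one_of_odd hw]
  | @motion f w m t hcond _ ih =>
    have hfw : 1 ≤ f w := by omega
    exact (and_congr evenAtEvensExcept_moveParticle_iff.symm
      (even_moveParticle_evenMember_add_iff hfw m).symm).trans ih

theorem stmt18_general (θ : ℤ → ℕ) (u : ℤ) (hu : Odd u)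
    (m : ℕ) (h1 : θ (u+1) = 0)
    (θ' : ℤ → ℕ) (v : ℤ) (hppm : PPM (θ, u) m (θ', v)) :
    ((∀ i : ℤ, Even i → Even (θ i)) ∧ Even m) ↔ (∀ i : ℤ, Even i → Even (θ' i)) := by
  have key := hppm.evenAtEvensExcept_and_iff
  dsimp only at key
  rw [evenMember_of_odd hu, h1, zero_add] at key
  rw [← key, ← evenAtEvensExcept_and_iff_forall hu.add_one, h1, and_iff_left Even.zero]

/-- Parity preservation for particle motion at an odd focus `u`: if
`(θ_u, θ_{u+1}) = (h, 0)` with `h > 0` and `θ_i + θ_{i+1} ≤ h` for `i ≥ u`, and `θ'`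
is the result of `ppm_u^{(m)}`, then: every even index carries an even frequency in `θ`
and `m` is even, if and only if every even index carries an even frequency in `θ'`. -/
theorem stmt18 (θ : ℤ → ℕ) (hfin : (Function.support θ).Finite) (u : ℤ) (hu : Odd u)
    (h m : ℕ) (hh : 0 < h) (h0 : θ u = h) (h1 : θ (u+1) = 0)
    (hbd : ∀ i, u ≤ i → θ i + θ (i+1) ≤ h)
    (θ' : ℤ → ℕ) (v : ℤ) (hppm : PPM (θ, u) m (θ', v)) :
    ((∀ i : ℤ, Even i → Even (θ i)) ∧ Even m) ↔ (∀ i : ℤ, Even i → Even (θ' i)) :=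
  stmt18_general θ u hu m h1 θ' v hppm
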